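/- Let M be an Orlicz function and 1 ≤ p < ∞. Then O_p(M) = { real sequences x = (x_k)_{k≥1} : there exists ρ > 0 with Σ_{i=1}^∞ (1/i)(Σ_{k=1}^{i} M(|x_k|/ρ))^p < ∞ } is a complete metric space with respect to the metric η₄(x,y) = inf{ ρ > 0 : (Σ_{i=1}^∞ (1/i)(Σ_{k=1}^{i} M(|x_k − y_k|/ρ))^p)^{1/p} ≤ 1 }. -/

import Mathlib

/-!
`η₄(x, y)` is the Luxemburg gauge of `x - y` for the modular `Φ(u, ρ) = opSum(u, ρ)^{1/p}`.
Convexity of `M` and Minkowski's inequality for the weighted `ℓ^p` sum over `i` give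
`Φ(u + v, ρ + σ) ≤ ρ/(ρ+σ) Φ(u, ρ) + σ/(ρ+σ) Φ(v, σ)`, so admissible radii add up, which is the
triangle inequality; with `v = 0` the same estimate shows that every `u ∈ O_p(M)` has an
admissible radius. The single term `i = k` of the series bounds `M(|u_k|/ρ)` by `(k+1)^{1/p}`,
and `M(t) → ∞`, so `|x_k - y_k| ≤ T_k η₄(x, y)`: `η₄` separates points and an `η₄`-Cauchy sequence
converges coordinatewise. Since `opSum` is lower semicontinuous for coordinatewise convergence
(Fatou), the limit lies in `O_p(M)` and is the `η₄`-limit.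
-/

open scoped ENNReal

/-- An Orlicz function. -/
def IsOrliczFunction (M : ℝ → ℝ) : Prop :=
  ContinuousOn M (Set.Ici 0) ∧ MonotoneOn M (Set.Ici 0) ∧ ConvexOn ℝ (Set.Ici 0) M ∧
    M 0 = 0 ∧ (∀ x : ℝ, 0 < x → 0 < M x) ∧ Filter.Tendsto M Filter.atTop Filter.atTop

/-- `∑_{i=1}^∞ (1/i) (∑_{k=1}^{i} M (|x_k| / ρ))^p`, valued in `ℝ≥0∞`. -/
noncomputable def opSum (M : ℝ → ℝ) (p : ℝ) (x : ℕ → ℝ) (ρ : ℝ) : ℝ≥0∞ :=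
  ∑' i : ℕ, ENNReal.ofReal (1 / (i + 1 : ℝ)) *
    ENNReal.ofReal (∑ k ∈ Finset.range (i + 1), M (|x k| / ρ)) ^ p

/-- The space `O_p(M)`. -/
def OpM (M : ℝ → ℝ) (p : ℝ) : Set (ℕ → ℝ) :=
  {x | ∃ ρ > 0, opSum M p x ρ < ⊤}

/-- The metric `η₄`. -/
noncomputable def eta4 (M : ℝ → ℝ) (p : ℝ) (x y : ℕ → ℝ) : ℝ :=
  sInf {ρ : ℝ | 0 < ρ ∧ (opSum M p (fun k => x k - y k) ρ) ^ (1 / p) ≤ 1}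

open Filter Topology Set

namespace IsOrliczFunction

variable {M : ℝ → ℝ}

lemma nonneg (hM : IsOrliczFunction M) {t : ℝ} (ht : 0 ≤ t) : 0 ≤ M t :=
  hM.2.2.2.1 ▸ hM.2.1 self_mem_Ici ht ht

lemma map_add_div_add_le (hM : IsOrliczFunction M) {a b ρ σ : ℝ} (ha : 0 ≤ a) (hb : 0 ≤ b)
    (hρ : 0 < ρ) (hσ : 0 < σ) :
    M ((a + b) / (ρ + σ)) ≤ ρ / (ρ + σ) * M (a / ρ) + σ / (ρ + σ) * M (b / σ) := by
  have hρσ : 0 < ρ + σ := by positivity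
  have hsplit : (a + b) / (ρ + σ) = ρ / (ρ + σ) * (a / ρ) + σ / (ρ + σ) * (b / σ) := by
    field_simp
  rw [hsplit]
  simpa only [smul_eq_mul] using hM.2.2.1.2 (mem_Ici.2 (div_nonneg ha hρ.le))
    (mem_Ici.2 (div_nonneg hb hσ.le)) (div_nonneg hρ.le hρσ.le) (div_nonneg hσ.le hρσ.le)
    (by field_simp)

lemma continuous_abs_div (hM : IsOrliczFunction M) {ρ : ℝ} (hρ : 0 ≤ ρ) :
    Continuous fun t => M (|t| / ρ) :=
  hM.1.comp_continuous (continuous_abs.div_const ρ) fun _ => div_nonneg (abs_nonneg _) hρ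

lemma exists_lt_map (hM : IsOrliczFunction M) (B : ℝ) : ∃ T > 0, ∀ t, T ≤ t → B < M t := by
  obtain ⟨T, hT⟩ := eventually_atTop.1 (hM.2.2.2.2.2.eventually_gt_atTop B)
  exact ⟨max T 1, by positivity, fun t ht => hT t (le_of_max_le_left ht)⟩

end IsOrliczFunction

namespace ENNReal

lemma tsum_rpow_add_le {ι : Type*} {p : ℝ} (hp : 1 ≤ p) (f g : ι → ℝ≥0∞) :
    (∑' i, (f i + g i) ^ p) ^ (1 / p) ≤ (∑' i, f i ^ p) ^ (1 / p) + (∑' i, g i ^ p) ^ (1 / p) := by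
  let _ : MeasurableSpace ι := ⊤
  simpa only [MeasureTheory.lintegral_count, Pi.add_apply] using
    lintegral_Lp_add_le (μ := MeasureTheory.Measure.count (α := ι))
      measurable_from_top.aemeasurable measurable_from_top.aemeasurable hp

/-- Minkowski's inequality for a weighted `ℓ^p` sum. -/
lemma tsum_mul_rpow_le_of_le_add {ι : Type*} {p : ℝ} (hp : 1 ≤ p) (w a b c : ι → ℝ≥0∞)
    (s t : ℝ≥0∞) (hc : ∀ i, c i ≤ s * a i + t * b i) :
    (∑' i, w i * c i ^ p) ^ (1 / p) ≤
      s * (∑' i, w i * a i ^ p) ^ (1 / p) + t * (∑' i, w i * b i ^ p) ^ (1 / p) := by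
  have hp0 : 0 < p := by linarith
  have hw : ∀ i, (w i ^ (1 / p)) ^ p = w i := fun i => by
    rw [← rpow_mul, one_div_mul_cancel hp0.ne', rpow_one]
  have hscale : ∀ (r : ℝ≥0∞) (x : ι → ℝ≥0∞),
      (∑' i, (w i ^ (1 / p) * (r * x i)) ^ p) ^ (1 / p) = r * (∑' i, w i * x i ^ p) ^ (1 / p) := by
    intro r x
    simp only [mul_rpow_of_nonneg _ _ hp0.le, hw, mul_left_comm (w _), ENNReal.tsum_mul_left]
    rw [mul_rpow_of_nonneg _ _ (by positivity), ← rpow_mul, mul_one_div_cancel hp0.ne', rpow_one]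
  calc (∑' i, w i * c i ^ p) ^ (1 / p)
      ≤ (∑' i, (w i ^ (1 / p) * (s * a i) + w i ^ (1 / p) * (t * b i)) ^ p) ^ (1 / p) := by
        gcongr with i
        rw [← mul_add, mul_rpow_of_nonneg _ _ hp0.le, hw]
        gcongr
        exact hc i
    _ ≤ _ := (tsum_rpow_add_le hp _ _).trans_eq (by rw [hscale, hscale])

lemma rpow_one_div_le_one_iff {p : ℝ} (hp : 0 < p) {a : ℝ≥0∞} : a ^ (1 / p) ≤ 1 ↔ a ≤ 1 := by
  rw [one_div, rpow_inv_le_iff hp, one_rpow]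

end ENNReal

section opSum

variable {M : ℝ → ℝ} {p : ℝ}

lemma opSum_anti (hM : IsOrliczFunction M) (hp : 0 ≤ p) (u : ℕ → ℝ) {ρ ρ' : ℝ} (hρ : 0 < ρ)
    (hle : ρ ≤ ρ') : opSum M p u ρ' ≤ opSum M p u ρ := by
  unfold opSum
  gcongr with i k
  exact hM.2.1 (div_nonneg (abs_nonneg _) (hρ.trans_le hle).le)
    (div_nonneg (abs_nonneg _) hρ.le) (by gcongr)

lemma opSum_zero (hM : IsOrliczFunction M) (hp : 0 < p) (ρ : ℝ) : opSum M p 0 ρ = 0 := by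
  simp [opSum, hM.2.2.2.1, ENNReal.zero_rpow_of_pos hp]

lemma opSum_neg (u : ℕ → ℝ) (ρ : ℝ) : opSum M p (-u) ρ = opSum M p u ρ := by
  simp only [opSum, Pi.neg_apply, abs_neg]

lemma opSum_add_rpow_le (hM : IsOrliczFunction M) (hp : 1 ≤ p) (u v : ℕ → ℝ) {ρ σ : ℝ}
    (hρ : 0 < ρ) (hσ : 0 < σ) :
    opSum M p (u + v) (ρ + σ) ^ (1 / p) ≤
      ENNReal.ofReal (ρ / (ρ + σ)) * opSum M p u ρ ^ (1 / p) +
        ENNReal.ofReal (σ / (ρ + σ)) * opSum M p v σ ^ (1 / p) := by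
  unfold opSum
  refine ENNReal.tsum_mul_rpow_le_of_le_add hp _ _ _ _ _ _ fun i => ?_
  have hsum_nonneg : ∀ (w : ℕ → ℝ) (r : ℝ), 0 < r → 0 ≤ ∑ k ∈ Finset.range (i + 1), M (|w k| / r) :=
    fun w r hr => Finset.sum_nonneg fun k _ => hM.nonneg (by positivity)
  rw [← ENNReal.ofReal_mul (by positivity), ← ENNReal.ofReal_mul (by positivity),
    ← ENNReal.ofReal_add (mul_nonneg (by positivity) (hsum_nonneg u ρ hρ))
      (mul_nonneg (by positivity) (hsum_nonneg v σ hσ)),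
    Finset.mul_sum, Finset.mul_sum, ← Finset.sum_add_distrib]
  refine ENNReal.ofReal_le_ofReal (Finset.sum_le_sum fun k _ => ?_)
  calc M (|(u + v) k| / (ρ + σ)) ≤ M ((|u k| + |v k|) / (ρ + σ)) :=
        hM.2.1 (mem_Ici.2 (by positivity)) (mem_Ici.2 (by positivity))
          (by gcongr; exact abs_add_le _ _)
    _ ≤ _ := hM.map_add_div_add_le (abs_nonneg _) (abs_nonneg _) hρ hσ

lemma opSum_add_right_rpow_le (hM : IsOrliczFunction M) (hp : 1 ≤ p) (u : ℕ → ℝ) {ρ σ : ℝ}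
    (hρ : 0 < ρ) (hσ : 0 < σ) :
    opSum M p u (ρ + σ) ^ (1 / p) ≤ ENNReal.ofReal (ρ / (ρ + σ)) * opSum M p u ρ ^ (1 / p) := by
  have hp0 : 0 < p := by linarith
  simpa [opSum_zero hM hp0, ENNReal.zero_rpow_of_pos (inv_pos.2 hp0)] using
    opSum_add_rpow_le hM hp u 0 hρ hσ

lemma opSum_add_lt_top (hM : IsOrliczFunction M) (hp : 1 ≤ p) {u v : ℕ → ℝ} {ρ σ : ℝ}
    (hρ : 0 < ρ) (hσ : 0 < σ) (hu : opSum M p u ρ < ⊤) (hv : opSum M p v σ < ⊤) :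
    opSum M p (u + v) (ρ + σ) < ⊤ := by
  have hp' : 0 < 1 / p := one_div_pos.2 (by linarith)
  refine (ENNReal.rpow_lt_top_iff_of_pos hp').1 ((opSum_add_rpow_le hM hp u v hρ hσ).trans_lt ?_)
  exact ENNReal.add_lt_top.2
    ⟨ENNReal.mul_lt_top ENNReal.ofReal_lt_top ((ENNReal.rpow_lt_top_iff_of_pos hp').2 hu),
      ENNReal.mul_lt_top ENNReal.ofReal_lt_top ((ENNReal.rpow_lt_top_iff_of_pos hp').2 hv)⟩

lemma map_abs_div_le_of_opSum_le_one (hM : IsOrliczFunction M) (hp : 0 < p) {u : ℕ → ℝ} {ρ : ℝ}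
    (hρ : 0 < ρ) (h : opSum M p u ρ ≤ 1) (k : ℕ) : M (|u k| / ρ) ≤ ((k : ℝ) + 1) ^ (1 / p) := by
  set A := ∑ j ∈ Finset.range (k + 1), M (|u j| / ρ)
  have hA : 0 ≤ A := Finset.sum_nonneg fun j _ => hM.nonneg (by positivity)
  have hterm : ENNReal.ofReal (1 / (k + 1 : ℝ)) * ENNReal.ofReal A ^ p ≤ 1 :=
    (ENNReal.le_tsum k).trans h
  rw [ENNReal.ofReal_rpow_of_nonneg hA hp.le, ← ENNReal.ofReal_mul (by positivity),
    ENNReal.ofReal_le_one, one_div_mul_eq_div, div_le_one (by positivity)] at hterm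
  calc M (|u k| / ρ) ≤ A :=
        Finset.single_le_sum (f := fun j => M (|u j| / ρ)) (fun j _ => hM.nonneg (by positivity))
          (Finset.self_mem_range_succ k)
    _ = (A ^ p) ^ (1 / p) := by rw [← Real.rpow_mul hA, mul_one_div_cancel hp.ne', Real.rpow_one]
    _ ≤ ((k : ℝ) + 1) ^ (1 / p) := by gcongr

lemma exists_abs_le_mul_of_opSum_le_one (hM : IsOrliczFunction M) (hp : 0 < p) (k : ℕ) :
    ∃ T > 0, ∀ (u : ℕ → ℝ) (ρ : ℝ), 0 < ρ → opSum M p u ρ ≤ 1 → |u k| ≤ T * ρ := by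
  obtain ⟨T, hT, hMT⟩ := hM.exists_lt_map (((k : ℝ) + 1) ^ (1 / p))
  refine ⟨T, hT, fun u ρ hρ h => ?_⟩
  by_contra! hlt
  have hTle : T ≤ |u k| / ρ := by rw [le_div_iff₀ hρ]; exact hlt.le
  exact (hMT _ hTle).not_ge (map_abs_div_le_of_opSum_le_one hM hp hρ h k)

lemma lowerSemicontinuous_opSum (hM : IsOrliczFunction M) {ρ : ℝ} (hρ : 0 ≤ ρ) :
    LowerSemicontinuous fun u => opSum M p u ρ :=
  lowerSemicontinuous_tsum fun _ => Continuous.lowerSemicontinuous <|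
    (ENNReal.continuous_const_mul ENNReal.ofReal_ne_top).comp <|
      ENNReal.continuous_rpow_const.comp <| ENNReal.continuous_ofReal.comp <|
        continuous_finsetSum _ fun k _ => (hM.continuous_abs_div hρ).comp (continuous_apply k)

end opSum

def eta4Radii (M : ℝ → ℝ) (p : ℝ) (u : ℕ → ℝ) : Set ℝ :=
  {ρ | 0 < ρ ∧ opSum M p u ρ ^ (1 / p) ≤ 1}

section eta4Radii

variable {M : ℝ → ℝ} {p : ℝ} {u v : ℕ → ℝ} {ρ σ : ℝ}

lemma mem_eta4Radii_iff (hp : 0 < p) : ρ ∈ eta4Radii M p u ↔ 0 < ρ ∧ opSum M p u ρ ≤ 1 :=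
  Iff.rfl.and (ENNReal.rpow_one_div_le_one_iff hp)

lemma bddBelow_eta4Radii : BddBelow (eta4Radii M p u) :=
  ⟨0, fun _ hρ => hρ.1.le⟩

lemma mem_eta4Radii_of_le (hM : IsOrliczFunction M) (hp : 0 ≤ p) (hρ : ρ ∈ eta4Radii M p u)
    (hle : ρ ≤ σ) : σ ∈ eta4Radii M p u :=
  ⟨hρ.1.trans_le hle,
    (ENNReal.rpow_le_rpow (opSum_anti hM hp u hρ.1 hle) (one_div_nonneg.2 hp)).trans hρ.2⟩

lemma eta4Radii_zero (hM : IsOrliczFunction M) (hp : 0 < p) : eta4Radii M p 0 = Ioi 0 := by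
  ext ρ
  simp [mem_eta4Radii_iff hp, opSum_zero hM hp]

lemma eta4Radii_neg (u : ℕ → ℝ) : eta4Radii M p (-u) = eta4Radii M p u := by
  simp only [eta4Radii, opSum_neg]

lemma add_mem_eta4Radii_add (hM : IsOrliczFunction M) (hp : 1 ≤ p) (hρ : ρ ∈ eta4Radii M p u)
    (hσ : σ ∈ eta4Radii M p v) : ρ + σ ∈ eta4Radii M p (u + v) := by
  have hρσ : 0 < ρ + σ := add_pos hρ.1 hσ.1
  refine ⟨hρσ, (opSum_add_rpow_le hM hp u v hρ.1 hσ.1).trans ?_⟩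
  calc _ ≤ ENNReal.ofReal (ρ / (ρ + σ)) * 1 + ENNReal.ofReal (σ / (ρ + σ)) * 1 := by
        gcongr
        exacts [hρ.2, hσ.2]
    _ = 1 := by
        rw [mul_one, mul_one, ← ENNReal.ofReal_add (div_nonneg hρ.1.le hρσ.le)
          (div_nonneg hσ.1.le hρσ.le), ← add_div, div_self hρσ.ne', ENNReal.ofReal_one]

lemma mem_OpM_of_mem_eta4Radii (hp : 0 < p) (hρ : ρ ∈ eta4Radii M p u) : u ∈ OpM M p :=
  ⟨ρ, hρ.1, ((mem_eta4Radii_iff hp).1 hρ).2.trans_lt ENNReal.one_lt_top⟩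

lemma eta4Radii_nonempty (hM : IsOrliczFunction M) (hp : 1 ≤ p) (hu : u ∈ OpM M p) :
    (eta4Radii M p u).Nonempty := by
  obtain ⟨ρ, hρ, hfin⟩ := hu
  set d := (opSum M p u ρ ^ (1 / p)).toReal
  have hd : 0 ≤ d := ENNReal.toReal_nonneg
  have hd_eq : opSum M p u ρ ^ (1 / p) = ENNReal.ofReal d :=
    (ENNReal.ofReal_toReal ((ENNReal.rpow_lt_top_iff_of_pos (one_div_pos.2 (by linarith))).2
      hfin).ne).symm
  -- enlarging `ρ` by the factor `d + 2` divides the gauge `opSum ^ (1 / p)` by at least `d + 2`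
  refine ⟨ρ + ρ * (d + 1), by positivity,
    (opSum_add_right_rpow_le hM hp u hρ (by positivity)).trans ?_⟩
  rw [hd_eq, ← ENNReal.ofReal_mul (by positivity), ENNReal.ofReal_le_one, div_mul_eq_mul_div,
    div_le_one (by positivity)]
  nlinarith

lemma exists_abs_le_mul_sInf_eta4Radii (hM : IsOrliczFunction M) (hp : 0 < p) (k : ℕ) :
    ∃ T > 0, ∀ u : ℕ → ℝ, (eta4Radii M p u).Nonempty → |u k| ≤ T * sInf (eta4Radii M p u) := by
  obtain ⟨T, hT, hbound⟩ := exists_abs_le_mul_of_opSum_le_one hM hp k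
  refine ⟨T, hT, fun u hne => ?_⟩
  rw [← div_le_iff₀' hT]
  refine le_csInf hne fun ρ hρ => ?_
  rw [mem_eta4Radii_iff hp] at hρ
  rw [div_le_iff₀' hT]
  exact hbound u ρ hρ.1 hρ.2

lemma mem_eta4Radii_of_tendsto (hM : IsOrliczFunction M) (hp : 0 < p) {u : ℕ → ℕ → ℝ}
    {x : ℕ → ℝ} (hu : ∀ k, Tendsto (fun n => u n k) atTop (𝓝 (x k)))
    (h : ∀ᶠ n in atTop, ρ ∈ eta4Radii M p (u n)) : ρ ∈ eta4Radii M p x := by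
  obtain ⟨n, hn⟩ := h.exists
  refine (mem_eta4Radii_iff hp).2 ⟨hn.1, ?_⟩
  exact ((lowerSemicontinuous_opSum hM hn.1.le).isClosed_preimage 1).mem_of_tendsto
    (tendsto_pi_nhds.2 hu) (h.mono fun n hn => ((mem_eta4Radii_iff hp).1 hn).2)

end eta4Radii

lemma sub_mem_OpM {M : ℝ → ℝ} {p : ℝ} (hM : IsOrliczFunction M) (hp : 1 ≤ p) {x y : ℕ → ℝ}
    (hx : x ∈ OpM M p) (hy : y ∈ OpM M p) : x - y ∈ OpM M p := by
  obtain ⟨ρ, hρ, hx⟩ := hx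
  obtain ⟨σ, hσ, hy⟩ := hy
  refine ⟨ρ + σ, add_pos hρ hσ, ?_⟩
  rw [sub_eq_add_neg]
  exact opSum_add_lt_top hM hp hρ hσ hx (by rwa [opSum_neg])

section eta4

variable {M : ℝ → ℝ} {p : ℝ} {x y z : ℕ → ℝ}

lemma eta4_eq_sInf (x y : ℕ → ℝ) : eta4 M p x y = sInf (eta4Radii M p (x - y)) := rfl

lemma eta4_self (hM : IsOrliczFunction M) (hp : 0 < p) (x : ℕ → ℝ) : eta4 M p x x = 0 := by
  rw [eta4_eq_sInf, sub_self, eta4Radii_zero hM hp, csInf_Ioi]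

lemma eta4_comm (x y : ℕ → ℝ) : eta4 M p x y = eta4 M p y x := by
  rw [eta4_eq_sInf, eta4_eq_sInf, ← neg_sub, eta4Radii_neg]

lemma eta4_le_of_mem_eta4Radii (hρ : ρ ∈ eta4Radii M p (x - y)) : eta4 M p x y ≤ ρ :=
  csInf_le bddBelow_eta4Radii hρ

lemma mem_eta4Radii_of_eta4_lt (hM : IsOrliczFunction M) (hp : 1 ≤ p) (hx : x ∈ OpM M p)
    (hy : y ∈ OpM M p) {ε : ℝ} (h : eta4 M p x y < ε) : ε ∈ eta4Radii M p (x - y) := by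
  obtain ⟨ρ, hρ, hρε⟩ :=
    exists_lt_of_csInf_lt (eta4Radii_nonempty hM hp (sub_mem_OpM hM hp hx hy)) h
  exact mem_eta4Radii_of_le hM (by linarith) hρ hρε.le

lemma eta4_triangle (hM : IsOrliczFunction M) (hp : 1 ≤ p) (hx : x ∈ OpM M p) (hy : y ∈ OpM M p)
    (hz : z ∈ OpM M p) : eta4 M p x z ≤ eta4 M p x y + eta4 M p y z := by
  have hxy := eta4Radii_nonempty hM hp (sub_mem_OpM hM hp hx hy)
  have hyz := eta4Radii_nonempty hM hp (sub_mem_OpM hM hp hy hz)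
  rw [eta4_eq_sInf, eta4_eq_sInf, eta4_eq_sInf,
    ← csInf_add hxy bddBelow_eta4Radii hyz bddBelow_eta4Radii, ← sub_add_sub_cancel x y z]
  exact csInf_le_csInf bddBelow_eta4Radii (hxy.add hyz)
    (add_subset_iff.2 fun _ hρ _ hσ => add_mem_eta4Radii_add hM hp hρ hσ)

lemma exists_abs_sub_le_mul_eta4 (hM : IsOrliczFunction M) (hp : 1 ≤ p) (k : ℕ) :
    ∃ T > 0, ∀ {x y : ℕ → ℝ}, x ∈ OpM M p → y ∈ OpM M p → |x k - y k| ≤ T * eta4 M p x y := by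
  obtain ⟨T, hT, hbound⟩ := exists_abs_le_mul_sInf_eta4Radii hM (by linarith) k
  exact ⟨T, hT, fun hx hy => hbound _ (eta4Radii_nonempty hM hp (sub_mem_OpM hM hp hx hy))⟩

lemma eq_of_eta4_eq_zero (hM : IsOrliczFunction M) (hp : 1 ≤ p) (hx : x ∈ OpM M p)
    (hy : y ∈ OpM M p) (h : eta4 M p x y = 0) : x = y := by
  funext k
  obtain ⟨T, -, hbound⟩ := exists_abs_sub_le_mul_eta4 hM hp k
  simpa [h, sub_eq_zero] using hbound hx hy

end eta4

noncomputable abbrev eta4MetricSpace {M : ℝ → ℝ} {p : ℝ} (hM : IsOrliczFunction M) (hp : 1 ≤ p) :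
    MetricSpace (OpM M p) where
  dist a b := eta4 M p a b
  dist_self a := eta4_self hM (by linarith) a
  dist_comm a b := eta4_comm a b
  dist_triangle a b c := eta4_triangle hM hp a.2 b.2 c.2
  eq_of_dist_eq_zero {a b} h := Subtype.ext (eq_of_eta4_eq_zero hM hp a.2 b.2 h)

theorem completeSpace_eta4MetricSpace {M : ℝ → ℝ} {p : ℝ} (hM : IsOrliczFunction M)
    (hp : 1 ≤ p) : @CompleteSpace _ (eta4MetricSpace hM hp).toUniformSpace := by
  let _ := eta4MetricSpace hM hp
  refine Metric.complete_of_cauchySeq_tendsto fun u hu => ?_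
  have hcoord : ∀ k, ∃ l, Tendsto (fun n => (u n).1 k) atTop (𝓝 l) := fun k => by
    obtain ⟨T, hT, hbound⟩ := exists_abs_sub_le_mul_eta4 hM hp k
    refine cauchySeq_tendsto_of_complete (Metric.cauchySeq_iff.2 fun ε hε => ?_)
    obtain ⟨N, hN⟩ := Metric.cauchySeq_iff.1 hu (ε / T) (div_pos hε hT)
    refine ⟨N, fun m hm n hn => ?_⟩
    calc dist ((u m).1 k) ((u n).1 k) ≤ T * dist (u m) (u n) := hbound (u m).2 (u n).2
      _ < T * (ε / T) := by gcongr; exact hN m hm n hn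
      _ = ε := mul_div_cancel₀ ε hT.ne'
  choose x hx using hcoord
  -- Fatou: a radius admissible for `u n - u m` for all large `m` stays admissible for `u n - x`
  have hrad : ∀ ε > 0, ∃ N, ∀ n ≥ N, ε ∈ eta4Radii M p ((u n).1 - x) := by
    intro ε hε
    obtain ⟨N, hN⟩ := Metric.cauchySeq_iff.1 hu ε hε
    refine ⟨N, fun n hn => mem_eta4Radii_of_tendsto hM (by linarith)
      (u := fun m => (u n).1 - (u m).1) (fun k => (hx k).const_sub _) ?_⟩
    filter_upwards [eventually_ge_atTop N] with m hm
    exact mem_eta4Radii_of_eta4_lt hM hp (u n).2 (u m).2 (hN n hn m hm)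
  obtain ⟨N, hN⟩ := hrad 1 one_pos
  have hxmem : x ∈ OpM M p := by
    simpa using sub_mem_OpM hM hp (u N).2 (mem_OpM_of_mem_eta4Radii (by linarith) (hN N le_rfl))
  refine ⟨⟨x, hxmem⟩, Metric.tendsto_atTop.2 fun ε hε => ?_⟩
  obtain ⟨N, hN⟩ := hrad (ε / 2) (half_pos hε)
  exact ⟨N, fun n hn => (eta4_le_of_mem_eta4Radii (hN n hn)).trans_lt (half_lt_self hε)⟩

theorem Op_complete_metric (M : ℝ → ℝ) (hM : IsOrliczFunction M) (p : ℝ) (hp : 1 ≤ p) :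
    ∃ inst : MetricSpace (OpM M p),
      (∀ a b : OpM M p, @dist _ inst.toDist a b = eta4 M p a.1 b.1) ∧
        @CompleteSpace _ inst.toUniformSpace :=
  ⟨eta4MetricSpace hM hp, fun _ _ => rfl, completeSpace_eta4MetricSpace hM hp⟩
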